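/- arXiv:2210.05279 — 4 statements merged into one kernel-verified Lean document; each statement's English description precedes it below -/
import Mathlib

section
/- Let d ≥ 2, s2 ∈ ℕ with 2 ≤ s2 ≤ d, k* ≥ 1, κ ≥ 1, and q > 0. Define a := 16dκ²(s2−1)/(q(s2+2)(d−1)) and b := κ²[(8d/(q(s2+2)))((s2−1)(k*−1)/(d−1) + 3) + 9]. If there exists a real k > 0 satisfying k ≥ k*[(ak+b)² − (ak+b)], then q ≥ (16 d (s2−1) k* κ²/((s2+2)(d−1))) · [18κ² − 1 + 2√(9κ²(9κ²−1) + 1/2 − 1/(2k*) + (3/2)(d−1)/(k*(s2−1)))]. -/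
/-!
Read as a condition on `k`, `k ≥ k*((ak+b)² − (ak+b))` says that a quadratic in `k` with
nonnegative leading coefficient `k*a²` takes a nonpositive value, so its discriminant
`(k*a+1)² − 4k*ab` is nonnegative. Since `a` and `b − 9κ²` are both `1/q` times constants, this
becomes a quadratic inequality in `q` whose constant term is nonpositive; hence `q` lies beyond
the larger root, which is the stated bound.
-/

noncomputable section

/-- `a` constant of Remark 2 (case `s2 > 1`). -/
def remABound (d s2 : ℕ) (κ q : ℝ) : ℝ :=
  16 * (d : ℝ) * κ ^ 2 * ((s2 : ℝ) - 1) / (q * ((s2 : ℝ) + 2) * ((d : ℝ) - 1))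

/-- `b` constant of Remark 2 (case `s2 > 1`). -/
def remBBound (d s2 kstar : ℕ) (κ q : ℝ) : ℝ :=
  κ ^ 2 * (8 * (d : ℝ) / (q * ((s2 : ℝ) + 2)) *
    (((s2 : ℝ) - 1) * ((kstar : ℝ) - 1) / ((d : ℝ) - 1) + 3) + 9)

theorem discrim_nonneg_of_quadratic_nonpos {R : Type*} [CommRing R] [LinearOrder R]
    [IsStrictOrderedRing R] {a b c x : R} (ha : 0 ≤ a) (h : a * (x * x) + b * x + c ≤ 0) :
    0 ≤ discrim a b c := by
  have hsq : discrim a b c = (2 * a * x + b) ^ 2 - 4 * a * (a * (x * x) + b * x + c) := by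
    rw [discrim]; ring
  nlinarith [sq_nonneg (2 * a * x + b), mul_nonpos_of_nonneg_of_nonpos ha h]

theorem four_mul_mul_le_sq_of_le_mul_sq_sub {K a b k : ℝ} (hK : 0 ≤ K)
    (hk : k ≥ K * ((a * k + b) ^ 2 - (a * k + b))) :
    4 * K * a * b ≤ (K * a + 1) ^ 2 := by
  have hdisc := discrim_nonneg_of_quadratic_nonpos (a := K * a ^ 2)
    (b := 2 * K * a * b - K * a - 1) (c := K * (b ^ 2 - b)) (x := k) (by positivity) (by linarith)
  have hval : discrim (K * a ^ 2) (2 * K * a * b - K * a - 1) (K * (b ^ 2 - b)) =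
      (K * a + 1) ^ 2 - 4 * K * a * b := by
    rw [discrim]; ring
  linarith

theorem add_sqrt_le_of_quadratic_nonneg {M P q : ℝ} (hP : P ≤ 0) (hq : 0 < q)
    (h : 0 ≤ q ^ 2 - 2 * M * q + P) : M + √(M ^ 2 - P) ≤ q := by
  set T := √(M ^ 2 - P)
  have hT : T ^ 2 = M ^ 2 - P := Real.sq_sqrt (by nlinarith)
  have hMT : M ≤ T := Real.le_sqrt_of_sq_le (by linarith)
  by_contra! hlt
  nlinarith [mul_neg_of_neg_of_pos (by linarith : q - M - T < 0) (by linarith : 0 < q - M + T)]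

theorem add_sqrt_le_of_le_mul_sq_sub {K A B c q k : ℝ} (hK : 0 ≤ K) (hA : 0 ≤ A)
    (hAB : K * A ≤ 4 * B) (hq : 0 < q)
    (hk : k ≥ K * ((A / q * k + (B / q + c)) ^ 2 - (A / q * k + (B / q + c)))) :
    K * A * (2 * c - 1) + √(4 * K * A * (K * A * c * (c - 1) + B)) ≤ q := by
  have hdisc := four_mul_mul_le_sq_of_le_mul_sq_sub hK hk
  have hquad : 0 ≤ q ^ 2 - 2 * (K * A * (2 * c - 1)) * q + K * A * (K * A - 4 * B) := by
    have hscale : q ^ 2 - 2 * (K * A * (2 * c - 1)) * q + K * A * (K * A - 4 * B) =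
        ((K * (A / q) + 1) ^ 2 - 4 * K * (A / q) * (B / q + c)) * q ^ 2 := by
      field_simp; ring
    rw [hscale]
    exact mul_nonneg (sub_nonneg.2 hdisc) (sq_nonneg q)
  have hroot := add_sqrt_le_of_quadratic_nonneg
    (mul_nonpos_of_nonneg_of_nonpos (mul_nonneg hK hA) (by linarith)) hq hquad
  convert hroot using 3; ring

def remACoeff (d s2 : ℕ) (κ : ℝ) : ℝ :=
  16 * (d : ℝ) * κ ^ 2 * ((s2 : ℝ) - 1) / (((s2 : ℝ) + 2) * ((d : ℝ) - 1))

-- The paper's `b` is `remBCoeff / q + 9κ²`; writing `remBCoeff` through `remACoeff` makes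
-- `k* · remACoeff ≤ 4 · remBCoeff` a one-line comparison.
def remBCoeff (d s2 kstar : ℕ) (κ : ℝ) : ℝ :=
  remACoeff d s2 κ / 2 * ((kstar : ℝ) - 1 + 3 * ((d : ℝ) - 1) / ((s2 : ℝ) - 1))

section

variable {d s2 kstar : ℕ} {κ : ℝ}

theorem remABound_eq (q : ℝ) : remABound d s2 κ q = remACoeff d s2 κ / q := by
  rw [remABound, remACoeff, div_div, mul_comm q]; ring

theorem remBBound_eq (hs2 : 1 < s2) (hd : 1 < d) (q : ℝ) :
    remBBound d s2 kstar κ q = remBCoeff d s2 kstar κ / q + 9 * κ ^ 2 := by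
  have hs2' : (s2 : ℝ) - 1 ≠ 0 := sub_ne_zero.2 (by exact_mod_cast hs2.ne')
  have hd' : (d : ℝ) - 1 ≠ 0 := sub_ne_zero.2 (by exact_mod_cast hd.ne')
  rw [remBBound, remBCoeff, remACoeff]
  field_simp
  ring

theorem remACoeff_nonneg (hs2 : 1 ≤ s2) (hd : 1 ≤ d) : 0 ≤ remACoeff d s2 κ := by
  have hs2' : (0 : ℝ) ≤ (s2 : ℝ) - 1 := sub_nonneg.2 (by exact_mod_cast hs2)
  have hd' : (0 : ℝ) ≤ (d : ℝ) - 1 := sub_nonneg.2 (by exact_mod_cast hd)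
  unfold remACoeff
  positivity

theorem mul_remACoeff_le_four_mul_remBCoeff (hk : 1 ≤ kstar) (hs2 : 1 < s2) (hd : s2 ≤ d) :
    kstar * remACoeff d s2 κ ≤ 4 * remBCoeff d s2 kstar κ := by
  have hA := remACoeff_nonneg (κ := κ) hs2.le (hs2.le.trans hd)
  have hs2' : (0 : ℝ) < (s2 : ℝ) - 1 := sub_pos.2 (by exact_mod_cast hs2)
  have hratio : 3 ≤ 3 * ((d : ℝ) - 1) / ((s2 : ℝ) - 1) := (le_div_iff₀ hs2').2 (by gcongr)
  have hk' : (1 : ℝ) ≤ kstar := by exact_mod_cast hk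
  have hfactor : 0 ≤ (kstar : ℝ) - 2 + 2 * (3 * ((d : ℝ) - 1) / ((s2 : ℝ) - 1)) := by linarith
  rw [remBCoeff]
  nlinarith [mul_nonneg hA hfactor]

theorem four_mul_remACoeff_mul_eq (hk : kstar ≠ 0) (c : ℝ) :
    4 * kstar * remACoeff d s2 κ * (kstar * remACoeff d s2 κ * c * (c - 1) +
        remBCoeff d s2 kstar κ) =
      (2 * remACoeff d s2 κ * kstar) ^ 2 * (c * (c - 1) + 1 / 2 - 1 / (2 * (kstar : ℝ)) +
        3 / 2 * ((d : ℝ) - 1) / ((kstar : ℝ) * ((s2 : ℝ) - 1))) := by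
  have hk' : (kstar : ℝ) ≠ 0 := by exact_mod_cast hk
  rw [remBCoeff]
  field_simp
  ring

end

theorem q_necessary_condition_s2_gt_one_general (d s2 kstar : ℕ) (κ q : ℝ)
    (hs2l : 2 ≤ s2) (hs2u : s2 ≤ d) (hkstar : 1 ≤ kstar)
    (hq : 0 < q)
    (hex : ∃ k : ℝ, 0 < k ∧
      k ≥ (kstar : ℝ) * ((remABound d s2 κ q * k + remBBound d s2 kstar κ q) ^ 2 -
        (remABound d s2 κ q * k + remBBound d s2 kstar κ q))) :
    q ≥ 16 * (d : ℝ) * ((s2 : ℝ) - 1) * (kstar : ℝ) * κ ^ 2 /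
        (((s2 : ℝ) + 2) * ((d : ℝ) - 1)) *
      (18 * κ ^ 2 - 1 + 2 * Real.sqrt (9 * κ ^ 2 * (9 * κ ^ 2 - 1) + 1 / 2 -
        1 / (2 * (kstar : ℝ)) + 3 / 2 * ((d : ℝ) - 1) / ((kstar : ℝ) * ((s2 : ℝ) - 1)))) := by
  obtain ⟨k, -, hk⟩ := hex
  have hs2 : 1 < s2 := hs2l
  have hA : 0 ≤ remACoeff d s2 κ := remACoeff_nonneg hs2.le (hs2.le.trans hs2u)
  rw [remABound_eq, remBBound_eq hs2 (hs2.trans_le hs2u)] at hk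
  have hbound := add_sqrt_le_of_le_mul_sq_sub (Nat.cast_nonneg _) hA
    (mul_remACoeff_le_four_mul_remBCoeff hkstar hs2 hs2u) hq hk
  rw [four_mul_remACoeff_mul_eq (by omega), Real.sqrt_mul (by positivity),
    Real.sqrt_sq (by positivity)] at hbound
  refine Eq.trans_le ?_ hbound
  rw [remACoeff]; ring

/-- Necessary condition on the number of random directions `q` for SZOHT, case `s2 > 1`
(Remark 2 of the paper): if some real `k > 0` satisfies `k ≥ k*[(ak+b)² − (ak+b)]`, then
`q ≥ (16 d (s2−1) k* κ²/((s2+2)(d−1))) · [18κ² − 1 +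
  2√(9κ²(9κ²−1) + 1/2 − 1/(2k*) + (3/2)(d−1)/(k*(s2−1)))]`. -/
theorem q_necessary_condition_s2_gt_one (d s2 kstar : ℕ) (κ q : ℝ)
    (hd : 2 ≤ d) (hs2l : 2 ≤ s2) (hs2u : s2 ≤ d) (hkstar : 1 ≤ kstar)
    (hκ : 1 ≤ κ) (hq : 0 < q)
    (hex : ∃ k : ℝ, 0 < k ∧
      k ≥ (kstar : ℝ) * ((remABound d s2 κ q * k + remBBound d s2 kstar κ q) ^ 2 -
        (remABound d s2 κ q * k + remBBound d s2 kstar κ q))) :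
    q ≥ 16 * (d : ℝ) * ((s2 : ℝ) - 1) * (kstar : ℝ) * κ ^ 2 /
        (((s2 : ℝ) + 2) * ((d : ℝ) - 1)) *
      (18 * κ ^ 2 - 1 + 2 * Real.sqrt (9 * κ ^ 2 * (9 * κ ^ 2 - 1) + 1 / 2 -
        1 / (2 * (kstar : ℝ)) + 3 / 2 * ((d : ℝ) - 1) / ((kstar : ℝ) * ((s2 : ℝ) - 1)))) :=
  q_necessary_condition_s2_gt_one_general d s2 kstar κ q hs2l hs2u hkstar hq hex

end
end

section
/- Let d ≥ 1, k* ≥ 1, κ ≥ 1, and q > 0. Define b := κ²(8d/q + 9). If there exists a real k with 0 < k ≤ d satisfying k ≥ k*·b·(b−1), then q ≥ 8κ²d/(√(d/k*) + 1). -/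
/-! Write `b = κ²(8d/q + 9)`. From `k* · b(b − 1) ≤ k ≤ d` we get `(b − 1)² ≤ b(b − 1) ≤ d/k*`,
so `b ≤ √(d/k*) + 1`, while `8κ²d/q ≤ b`. -/

lemma sub_one_le_sqrt_of_mul_sub_one_le {b x : ℝ} (h : b * (b - 1) ≤ x) : b - 1 ≤ √x := by
  rcases le_or_gt b 1 with hb | hb
  · linarith [Real.sqrt_nonneg x]
  · exact Real.le_sqrt_of_sq_le (by nlinarith)

theorem q_necessary_condition_s2_eq_one_general (d kstar : ℕ) (κ q : ℝ)
    (hkstar : 1 ≤ kstar) (hq : 0 < q)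
    (hex : ∃ k : ℝ, 0 < k ∧ k ≤ (d : ℝ) ∧
      k ≥ (kstar : ℝ) * (κ ^ 2 * (8 * (d : ℝ) / q + 9)) *
        (κ ^ 2 * (8 * (d : ℝ) / q + 9) - 1)) :
    q ≥ 8 * κ ^ 2 * (d : ℝ) / (Real.sqrt ((d : ℝ) / (kstar : ℝ)) + 1) := by
  obtain ⟨k, -, hkd, hkb⟩ := hex
  have hkstar_pos : (0 : ℝ) < kstar := by exact_mod_cast hkstar
  set b := κ ^ 2 * (8 * (d : ℝ) / q + 9) with hb
  have hbb : b * (b - 1) ≤ d / kstar := by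
    rw [le_div_iff₀' hkstar_pos]
    linarith
  have hqb : 8 * κ ^ 2 * d / q ≤ b := by
    have hb_split : b = 8 * κ ^ 2 * d / q + 9 * κ ^ 2 := by rw [hb]; ring
    linarith [sq_nonneg κ]
  rw [ge_iff_le, div_le_comm₀ (by positivity) hq]
  linarith [sub_one_le_sqrt_of_mul_sub_one_le hbb]

/-- Necessary condition on the number of random directions `q` for SZOHT, case `s2 = 1`
(Remark 2 of the paper): with `b = κ²(8d/q + 9)`, if some real `k` with `0 < k ≤ d`
satisfies `k ≥ k*·b·(b−1)`, then `q ≥ 8κ²d/(√(d/k*) + 1)`. -/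
theorem q_necessary_condition_s2_eq_one (d kstar : ℕ) (κ q : ℝ)
    (hd : 1 ≤ d) (hkstar : 1 ≤ kstar) (hκ : 1 ≤ κ) (hq : 0 < q)
    (hex : ∃ k : ℝ, 0 < k ∧ k ≤ (d : ℝ) ∧
      k ≥ (kstar : ℝ) * (κ ^ 2 * (8 * (d : ℝ) / q + 9)) *
        (κ ^ 2 * (8 * (d : ℝ) / q + 9) - 1)) :
    q ≥ 8 * κ ^ 2 * (d : ℝ) / (Real.sqrt ((d : ℝ) / (kstar : ℝ)) + 1) :=
  q_necessary_condition_s2_eq_one_general d kstar κ q hkstar hq hex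
end

section
/- Let ρ ∈ (0,1) and let k, k* be positive reals with k ≥ ρ²k*/(1−ρ²)². Define γ = √(1 + (k*/k + √((4 + k*/k)·(k*/k)))/2). Then γ² ≤ 1/ρ², and in particular ργ ≤ 1. -/
/-!
With `r = k*/k` and `t = (1 - ρ²)/ρ²`, so that `1/ρ² = 1 + t`, the hypothesis on `k` reads
`r (1 + t) ≤ t²`. This is exactly what makes `√((4 + r) r) ≤ 2t - r` after squaring, i.e.
`r + √((4 + r) r) ≤ 2t`, and hence `γ² ≤ 1 + t = 1/ρ²`.
-/

theorem add_sqrt_mul_le_two_mul {r t : ℝ} (ht : 0 ≤ t) (h : r * (1 + t) ≤ t ^ 2) :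
    r + √((4 + r) * r) ≤ 2 * t := by
  have hrt : r ≤ t := by nlinarith
  have hsqrt : √((4 + r) * r) ≤ 2 * t - r :=
    Real.sqrt_le_iff.mpr ⟨by linarith, by nlinarith⟩
  linarith

theorem gamma_rho_le_one_general (ρ k kstar : ℝ) (hρ0 : 0 < ρ) (hρ1 : ρ < 1)
    (hk : 0 < k)
    (hklb : k ≥ ρ ^ 2 * kstar / (1 - ρ ^ 2) ^ 2) :
    (Real.sqrt (1 + (kstar / k + Real.sqrt ((4 + kstar / k) * (kstar / k))) / 2)) ^ 2 ≤
        1 / ρ ^ 2 ∧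
      ρ * Real.sqrt (1 + (kstar / k + Real.sqrt ((4 + kstar / k) * (kstar / k))) / 2) ≤ 1 := by
  set r := kstar / k
  set γ := √(1 + (r + √((4 + r) * r)) / 2)
  set t := (1 - ρ ^ 2) / ρ ^ 2 with ht_def
  have hρ2 : 0 < ρ ^ 2 := by positivity
  have hgap : 0 < 1 - ρ ^ 2 := by nlinarith
  have hinv : 1 + t = 1 / ρ ^ 2 := by rw [ht_def]; field_simp; ring
  have hr : r * (1 + t) ≤ t ^ 2 := by
    rw [ge_iff_le, div_le_iff₀ (by positivity)] at hklb
    simp only [r, ht_def]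
    field_simp
    rw [add_sub_cancel]
    linarith
  have hγ : γ ≤ 1 / ρ := by
    refine Real.sqrt_le_iff.mpr ⟨by positivity, ?_⟩
    rw [div_pow, one_pow]
    linarith [add_sqrt_mul_le_two_mul (by positivity) hr]
  constructor
  · calc γ ^ 2 ≤ (1 / ρ) ^ 2 := pow_le_pow_left₀ (Real.sqrt_nonneg _) hγ 2
      _ = 1 / ρ ^ 2 := by rw [div_pow, one_pow]
  · calc ρ * γ ≤ ρ * (1 / ρ) := mul_le_mul_of_nonneg_left hγ hρ0.le
      _ = 1 := mul_one_div_cancel hρ0.ne'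

/-- If `k ≥ ρ²k*/(1-ρ²)²` then the hard-thresholding expansivity factor
`γ = √(1 + (k*/k + √((4 + k*/k)·(k*/k)))/2)` satisfies `γ² ≤ 1/ρ²`, hence `ργ ≤ 1`. -/
theorem gamma_rho_le_one (ρ k kstar : ℝ) (hρ0 : 0 < ρ) (hρ1 : ρ < 1)
    (hk : 0 < k) (hkstar : 0 < kstar)
    (hklb : k ≥ ρ ^ 2 * kstar / (1 - ρ ^ 2) ^ 2) :
    (Real.sqrt (1 + (kstar / k + Real.sqrt ((4 + kstar / k) * (kstar / k))) / 2)) ^ 2 ≤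
        1 / ρ ^ 2 ∧
      ρ * Real.sqrt (1 + (kstar / k + Real.sqrt ((4 + kstar / k) * (kstar / k))) / 2) ≤ 1 :=
  gamma_rho_le_one_general ρ k kstar hρ0 hρ1 hk hklb
end

section
/- Let κ ≥ 1 and set ρ = √(1 − 2/(13κ²)) (so ρ ∈ (0,1)). Let k, k* be positive reals with k ≥ 2k*ρ²/(1−ρ²)², and define γ = √(1 + (k*/k + √((4 + k*/k)·(k*/k)))/2). Then ρ²γ² ≤ 1 − 1/(26κ²). -/
/-!
Write `ε = 2/(13κ²)` and `t = k*/k`. Then `ρ² = 1 - ε`, the target is `1 - ε/4`, and the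
hypothesis on `k` says `2(1 - ε)t ≤ ε²`. Isolating the square root in `(1 - ε)γ² ≤ 1 - ε/4` and
squaring leaves `(16 - 4ε)(1 - ε)t ≤ 9ε²`, which the hypothesis gives with room to spare.
-/

theorem one_sub_mul_one_add_half_add_sqrt_le {ε t : ℝ} (hε0 : 0 ≤ ε) (hε1 : ε ≤ 1)
    (ht : 0 ≤ t) (hts : 2 * (1 - ε) * t ≤ ε ^ 2) :
    (1 - ε) * (1 + (t + √((4 + t) * t)) / 2) ≤ 1 - ε / 4 := by
  set s := √((4 + t) * t)
  have hs : s ^ 2 = (4 + t) * t := Real.sq_sqrt (by positivity)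
  have hrhs : 0 ≤ 3 * ε - 2 * (1 - ε) * t := by nlinarith
  have hsqrt_le : 2 * (1 - ε) * s ≤ 3 * ε - 2 * (1 - ε) * t := by
    refine pow_le_pow_iff_left₀ (by positivity) hrhs two_ne_zero |>.mp ?_
    nlinarith
  linarith

/-- With `ρ = √(1 − 2/(13κ²))` and `k ≥ 2k*ρ²/(1−ρ²)²`, the contraction factor satisfies
`ρ²γ² ≤ 1 − 1/(26κ²)`. -/
theorem rho_sq_gamma_sq_bound (κ k kstar : ℝ) (hκ : 1 ≤ κ) (hk : 0 < k) (hkstar : 0 < kstar)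
    (hklb : k ≥ 2 * kstar * (Real.sqrt (1 - 2 / (13 * κ ^ 2))) ^ 2 /
      (1 - (Real.sqrt (1 - 2 / (13 * κ ^ 2))) ^ 2) ^ 2) :
    (Real.sqrt (1 - 2 / (13 * κ ^ 2))) ^ 2 *
        (Real.sqrt (1 + (kstar / k + Real.sqrt ((4 + kstar / k) * (kstar / k))) / 2)) ^ 2 ≤
      1 - 1 / (26 * κ ^ 2) := by
  set ε := 2 / (13 * κ ^ 2)
  have hε0 : 0 < ε := by positivity
  have hε1 : ε ≤ 1 := by
    rw [div_le_one (by positivity)]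
    nlinarith
  have ht : 0 ≤ kstar / k := by positivity
  have hρ : √(1 - ε) ^ 2 = 1 - ε := Real.sq_sqrt (by linarith)
  rw [hρ, sub_sub_cancel, ge_iff_le, div_le_iff₀ (by positivity)] at hklb
  have hts : 2 * (1 - ε) * (kstar / k) ≤ ε ^ 2 := by
    rw [mul_div_assoc', div_le_iff₀ hk]
    linarith
  rw [hρ, Real.sq_sqrt (by positivity), show 1 / (26 * κ ^ 2) = ε / 4 by ring]
  exact one_sub_mul_one_add_half_add_sqrt_le hε0.le hε1 ht hts
end
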